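/- For every positive integer r, the complete graph K_{4r} satisfies MinVar(K_{4r}) ≤ 3r if r is odd, and MinVar(K_{4r}) ≤ 7r if r is even. -/

import Mathlib

open Finset

/-- The popularity of vertex `v` under an edge labeling `σ`: the sum of the labels of
the edges of `G` incident to `v`. -/
noncomputable def popularity {V : Type*} [Fintype V] (G : SimpleGraph V) (σ : Sym2 V → ℕ)
    (v : V) : ℕ := by
  classical
  exact ∑ e ∈ G.edgeFinset.filter (fun e => v ∈ e), σ e

/-- An edge labeling of `G`: a bijection from the edge set of `G` onto `{1,…,θ}`,
where `θ` is the number of edges of `G`. -/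
def IsEdgeLabeling {V : Type*} (G : SimpleGraph V) (σ : Sym2 V → ℕ) : Prop :=
  Set.BijOn σ G.edgeSet (Set.Icc 1 (Nat.card G.edgeSet))

/-- The access-variance of a `d`-regular graph `G` under edge labeling `σ`:
`Σ_v (p_v − d(θ+1)/2)²`, where `θ` is the number of edges of `G`. -/
noncomputable def accessVar {V : Type*} [Fintype V] (G : SimpleGraph V) (d : ℕ)
    (σ : Sym2 V → ℕ) : ℝ :=
  ∑ v : V, ((popularity G σ v : ℝ) - d * (Nat.card G.edgeSet + 1) / 2) ^ 2

/-- `MinVar(G)`: the minimum of the access-variance over all edge labelings of the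
`d`-regular graph `G` (the infimum of the finite nonempty set of achievable values). -/
noncomputable def minVar {V : Type*} [Fintype V] (G : SimpleGraph V) (d : ℕ) : ℝ :=
  sInf { x | ∃ σ : Sym2 V → ℕ, IsEdgeLabeling G σ ∧ accessVar G d σ = x }

/-- A graph `H` is supermagic if its edges can be labeled bijectively with consecutive
positive integers `a, a+1, …, a+|E|−1` so that all vertex sums are equal. -/
def Supermagic {V : Type*} [Fintype V] (H : SimpleGraph V) : Prop :=
  ∃ (a : ℕ) (σ : Sym2 V → ℕ) (c : ℕ), 0 < a ∧
    Set.BijOn σ H.edgeSet (Set.Icc a (a + Nat.card H.edgeSet - 1)) ∧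
    ∀ v : V, popularity H σ v = c

/-!
Write `n = 4r - 1` and view the vertices of `K_{4r}` as `ℤ/n ∪ {∞}`, with `∞` encoded as `n`.
The matchings `M_m = {{a, b} : a + b ≡ m} ∪ {{∞, m/2}}`, `m ∈ ℤ/n`, form a 1-factorization of
`K_{4r}` into `n` perfect matchings of `2r` edges. The edges of `M_m` receive the labels
`2rm + 1, …, 2rm + 2r`; since every vertex meets every matching once, the block offsets `2rm`
add the same amount to every popularity, and only the inner labels in `{1, …, 2r}` matter.
Inside `M_m` an edge is determined by its cyclic length `t ∈ {1, …, 2r-1}` (`t = 0` for the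
edge at `∞`). Lengths `t ≥ 2` get the fixed inner labels `{1, …, 2r} \ {r, r+1}`; the edges of
length `0` and `1` share `r` and `r + 1`, in an order depending on whether `m < 2r`. A finite
vertex meets every length `t ≥ 2` exactly twice, so its popularity is fixed up to three labels
in `{r, r+1}`, and each popularity misses the mean `d(θ+1)/2` by `1/2`, except at one vertex
(only when `r = 1`) where it misses by `3/2`. Hence `MinVar(K_{4r}) ≤ 4r/4 + 2 = r + 2`.
-/

section General

variable {V : Type*}

theorem minVar_le_accessVar [Fintype V] (G : SimpleGraph V) (d : ℕ) {σ : Sym2 V → ℕ}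
    (hσ : IsEdgeLabeling G σ) : minVar G d ≤ accessVar G d σ :=
  csInf_le ⟨0, by rintro _ ⟨τ, -, rfl⟩; exact sum_nonneg fun _ _ => sq_nonneg _⟩
    ⟨σ, hσ, rfl⟩

theorem isEdgeLabeling_of_injOn [Finite V] (G : SimpleGraph V) {σ : Sym2 V → ℕ}
    (hmaps : Set.MapsTo σ G.edgeSet (Set.Icc 1 (Nat.card G.edgeSet)))
    (hinj : Set.InjOn σ G.edgeSet) : IsEdgeLabeling G σ := by
  refine ⟨hmaps, hinj, ?_⟩
  have : σ '' G.edgeSet = Set.Icc 1 (Nat.card G.edgeSet) := by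
    refine Set.eq_of_subset_of_ncard_le hmaps.image_subset ?_ (Set.finite_Icc _ _)
    rw [hinj.ncard_image, Nat.card_coe_set_eq, Set.ncard_eq_toFinset_card', Set.toFinset_Icc,
      Nat.card_Icc]
    omega
  exact this ▸ Set.surjOn_image σ G.edgeSet

theorem popularity_top_add_self [Fintype V] [DecidableEq V] (σ : Sym2 V → ℕ) (v : V) :
    popularity ⊤ σ v + σ s(v, v) = ∑ u, σ s(v, u) := by
  have hinc :
      (⊤ : SimpleGraph V).edgeFinset.filter (v ∈ ·) = (univ.erase v).image (s(v, ·)) := by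
    ext e
    induction e with
    | _ a b => aesop (add simp Sym2.eq_swap)
  rw [popularity, ← sum_erase_add _ _ (mem_univ v),
    ← sum_image (f := σ) (s := univ.erase v) (g := (s(v, ·))) (by simp), ← hinc]
  convert rfl

theorem card_edgeSet_top [Fintype V] :
    Nat.card (⊤ : SimpleGraph V).edgeSet = (Fintype.card V).choose 2 := by
  classical
  rw [Nat.card_eq_fintype_card, ← SimpleGraph.edgeFinset_card,
    SimpleGraph.card_edgeFinset_top_eq_card_choose_two]

end General

theorem sq_sub_half_le {p A k : ℕ} (h₁ : A ≤ 2 * p + k) (h₂ : 2 * p ≤ A + k) :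
    ((p : ℝ) - A / 2) ^ 2 ≤ k ^ 2 / 4 := by
  have h₁' : (A : ℝ) ≤ 2 * p + k := by exact_mod_cast h₁
  have h₂' : 2 * (p : ℝ) ≤ A + k := by exact_mod_cast h₂
  nlinarith

theorem Nat.eq_and_eq_of_mul_add_eq_mul_add {k m m' v v' : ℕ} (hv : v < k) (hv' : v' < k)
    (h : k * m + v = k * m' + v') : m = m' ∧ v = v' := by
  obtain rfl : m = m' := by
    simpa [Nat.mul_add_div (by omega : 0 < k), Nat.div_eq_of_lt hv, Nat.div_eq_of_lt hv'] using
      congrArg (· / k) h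
  omega

theorem Finset.sum_range_two_mul_eq_sum_add_reflect {M : Type*} [AddCommMonoid M] (f : ℕ → M)
    (N : ℕ) :
    ∑ i ∈ range (2 * N), f i = ∑ i ∈ range N, (f i + f (2 * N - 1 - i)) := by
  rw [two_mul, sum_range_add, sum_add_distrib, ← sum_range_reflect (fun i => f (N + i))]
  refine congrArg _ (sum_congr rfl fun i hi => ?_)
  rw [mem_range] at hi
  congr 1
  omega

namespace CompleteGraphLabeling

/-- `x mod (4r-1)`, written with `if` so that `omega` can reason about it; correct only for
`x < 3(4r-1)`. -/
def reduceMod (r x : ℕ) : ℕ :=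
  if x < 4 * r - 1 then x
  else if x < 2 * (4 * r - 1) then x - (4 * r - 1) else x - 2 * (4 * r - 1)

/-- For an edge at `∞ = 4r-1`, `min a b` is its finite end `a`, and the edge lies in `M_{2a}`. -/
def matchingIndex (r a b : ℕ) : ℕ :=
  if a = 4 * r - 1 ∨ b = 4 * r - 1 then reduceMod r (2 * min a b) else reduceMod r (a + b)

def edgeLength (r a b : ℕ) : ℕ :=
  if a = 4 * r - 1 ∨ b = 4 * r - 1 then 0
  else min (a - b + (b - a)) (4 * r - 1 - (a - b + (b - a)))

def innerLabel (r m t : ℕ) : ℕ :=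
  if t = 0 then (if m < 2 * r then r + 1 else r)
  else if t = 1 then (if m < 2 * r then r else r + 1)
  else if t ≤ r then t - 1 else t + 1

def label (r a b : ℕ) : ℕ :=
  2 * r * matchingIndex r a b + innerLabel r (matchingIndex r a b) (edgeLength r a b)

variable {r : ℕ}

theorem label_comm (r a b : ℕ) : label r a b = label r b a := by
  simp only [label, matchingIndex, edgeLength, or_comm, min_comm, add_comm]

theorem matchingIndex_lt {a b : ℕ} (ha : a < 4 * r) (hb : b < 4 * r) :
    matchingIndex r a b < 4 * r - 1 := by
  unfold matchingIndex reduceMod; split_ifs <;> omega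

theorem edgeLength_le (r a b : ℕ) : edgeLength r a b ≤ 2 * r - 1 := by
  unfold edgeLength; split_ifs <;> omega

theorem innerLabel_pos_and_le (hr : 1 ≤ r) (m : ℕ) {t : ℕ} (ht : t ≤ 2 * r - 1) :
    0 < innerLabel r m t ∧ innerLabel r m t ≤ 2 * r := by
  unfold innerLabel; split_ifs <;> omega

theorem innerLabel_injective (r m : ℕ) : Function.Injective (innerLabel r m) := by
  intro t t' h
  unfold innerLabel at h; split_ifs at h <;> omega

theorem eq_of_reduceMod_eq {x y : ℕ} (hx : x < 2 * (4 * r - 1)) (hy : y < 2 * (4 * r - 1))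
    (h : reduceMod r x = reduceMod r y) :
    x = y ∨ x = y + (4 * r - 1) ∨ y = x + (4 * r - 1) := by
  unfold reduceMod at h; split_ifs at h <;> omega

theorem eq_of_matchingIndex_eq_of_edgeLength_eq {a b a' b' : ℕ} (ha : a < 4 * r) (hb : b < 4 * r)
    (ha' : a' < 4 * r) (hb' : b' < 4 * r) (hab : a ≠ b) (hab' : a' ≠ b')
    (hm : matchingIndex r a b = matchingIndex r a' b')
    (ht : edgeLength r a b = edgeLength r a' b') : a = a' ∧ b = b' ∨ a = b' ∧ b = a' := by
  unfold matchingIndex at hm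
  unfold edgeLength at ht
  split_ifs at hm ht with h h'
  · have := eq_of_reduceMod_eq (by omega) (by omega) hm
    omega
  · omega
  · omega
  · have := eq_of_reduceMod_eq (by omega) (by omega) hm
    omega

theorem label_mem_Icc (hr : 1 ≤ r) {a b : ℕ} (ha : a < 4 * r) (hb : b < 4 * r) :
    label r a b ∈ Set.Icc 1 (2 * r * (4 * r - 1)) := by
  have hm := matchingIndex_lt ha hb
  obtain ⟨hv₁, hv₂⟩ := innerLabel_pos_and_le hr (matchingIndex r a b) (edgeLength_le r a b)
  have : 2 * r * (matchingIndex r a b + 1) ≤ 2 * r * (4 * r - 1) := Nat.mul_le_mul_left _ hm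
  unfold label
  exact ⟨by omega, by linarith⟩

theorem eq_of_label_eq (hr : 1 ≤ r) {a b a' b' : ℕ} (ha : a < 4 * r) (hb : b < 4 * r)
    (ha' : a' < 4 * r) (hb' : b' < 4 * r) (hab : a ≠ b) (hab' : a' ≠ b')
    (h : label r a b = label r a' b') : a = a' ∧ b = b' ∨ a = b' ∧ b = a' := by
  have hv := innerLabel_pos_and_le hr (matchingIndex r a b) (edgeLength_le r a b)
  have hv' := innerLabel_pos_and_le hr (matchingIndex r a' b') (edgeLength_le r a' b')
  obtain ⟨hm, hi⟩ := Nat.eq_and_eq_of_mul_add_eq_mul_add (k := 2 * r)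
    (m := matchingIndex r a b) (m' := matchingIndex r a' b')
    (v := innerLabel r (matchingIndex r a b) (edgeLength r a b) - 1)
    (v' := innerLabel r (matchingIndex r a' b') (edgeLength r a' b') - 1)
    (by omega) (by omega) (by unfold label at h; omega)
  rw [hm] at hi hv
  exact eq_of_matchingIndex_eq_of_edgeLength_eq ha hb ha' hb' hab hab' hm
    (innerLabel_injective r (matchingIndex r a' b') (by omega))

def labeling (r : ℕ) : Sym2 (Fin (4 * r)) → ℕ :=
  Sym2.lift ⟨fun a b => label r a b, fun a b => label_comm r a b⟩

theorem labeling_mk (a b : Fin (4 * r)) : labeling r s(a, b) = label r a b := rfl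

theorem card_edgeSet_top_fin (r : ℕ) :
    Nat.card (⊤ : SimpleGraph (Fin (4 * r))).edgeSet = 2 * r * (4 * r - 1) := by
  rw [card_edgeSet_top, Fintype.card_fin, Nat.choose_two_right,
    show 4 * r * (4 * r - 1) = 2 * (2 * r * (4 * r - 1)) by ring]
  omega

theorem isEdgeLabeling_labeling (hr : 1 ≤ r) : IsEdgeLabeling ⊤ (labeling r) := by
  refine isEdgeLabeling_of_injOn _ ?_ ?_
  · rintro ⟨a, b⟩ -
    rw [card_edgeSet_top_fin]
    exact label_mem_Icc hr a.isLt b.isLt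
  · rintro ⟨a, b⟩ hab ⟨a', b'⟩ hab' h
    simp only [SimpleGraph.mem_edgeSet, SimpleGraph.top_adj, ne_eq, ← Fin.val_inj] at hab hab'
    rcases eq_of_label_eq hr a.isLt b.isLt a'.isLt b'.isLt hab hab' h with
      ⟨h₁, h₂⟩ | ⟨h₁, h₂⟩
    · simp [Fin.ext h₁, Fin.ext h₂]
    · simp [Fin.ext h₁, Fin.ext h₂, Sym2.eq_swap]

/-- The loop `{v, v}` gets the label of `{v, ∞}`, so the popularity of `v` is the sum of
`label r v b` over `b < 4r - 1`. -/
theorem label_self {v : ℕ} (hv : v ≤ 4 * r - 1) : label r v v = label r v (4 * r - 1) := by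
  simp only [label, matchingIndex, edgeLength, min_self, min_eq_left hv, or_true, if_true,
    ite_self, two_mul, Nat.sub_self, add_zero, Nat.zero_le, min_eq_left]

theorem popularity_labeling (v : Fin (4 * r)) :
    popularity ⊤ (labeling r) v = ∑ b ∈ range (4 * r - 1), label r v b := by
  have h := popularity_top_add_self (labeling r) v
  simp only [labeling_mk] at h
  rw [Fin.sum_univ_eq_sum_range (fun b => label r v b) (4 * r),
    congrArg range (by have := v.isLt; omega : 4 * r = 4 * r - 1 + 1), sum_range_succ,
    label_self (Nat.le_sub_one_of_lt v.isLt)] at h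
  omega

theorem sum_comp_matchingIndex {M : Type*} [AddCommMonoid M] {v : ℕ} (hv : v < 4 * r)
    (F : ℕ → M) :
    ∑ b ∈ range (4 * r - 1), F (matchingIndex r v b) = ∑ m ∈ range (4 * r - 1), F m := by
  rcases (by omega : v = 4 * r - 1 ∨ v < 4 * r - 1) with rfl | hv
  · refine sum_nbij' (matchingIndex r (4 * r - 1))
      (fun m => if m % 2 = 0 then m / 2 else (m + (4 * r - 1)) / 2) ?_ ?_ ?_ ?_ (fun _ _ => rfl)
    all_goals
      intro b hb
      rw [mem_range] at hb
      simp only [mem_range, matchingIndex, reduceMod, true_or]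
      split_ifs <;> omega
  · refine sum_nbij' (matchingIndex r v)
      (fun m => if v ≤ m then m - v else m + (4 * r - 1) - v) ?_ ?_ ?_ ?_ (fun _ _ => rfl)
    all_goals
      intro b hb
      rw [mem_range] at hb
      simp only [mem_range, matchingIndex, reduceMod]
      split_ifs <;> omega

def innerSum (r v : ℕ) : ℕ :=
  ∑ b ∈ range (4 * r - 1), innerLabel r (matchingIndex r v b) (edgeLength r v b)

theorem two_mul_popularity_labeling (hr : 1 ≤ r) (v : Fin (4 * r)) :
    2 * popularity ⊤ (labeling r) v + (4 * r - 1) * (2 * r + 1) =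
      (4 * r - 1) * (2 * r * (4 * r - 1) + 1) + 2 * innerSum r v := by
  rw [popularity_labeling, innerSum]
  simp only [label, sum_add_distrib, ← mul_sum]
  have hsum : ∑ b ∈ range (4 * r - 1), matchingIndex r v b = ∑ m ∈ range (4 * r - 1), m :=
    sum_comp_matchingIndex v.isLt (fun m => m)
  have gauss := sum_range_id_mul_two (4 * r - 1)
  rw [hsum]
  obtain ⟨s, rfl⟩ : ∃ s, r = s + 1 := ⟨r - 1, by omega⟩
  rw [show 4 * (s + 1) - 1 = 4 * s + 3 by omega] at gauss ⊢
  rw [show 4 * s + 3 - 1 = 4 * s + 2 by omega] at gauss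
  nlinarith [gauss]

theorem two_mul_innerSum_infinity (hr : 1 ≤ r) :
    2 * innerSum r (4 * r - 1) = (4 * r - 1) * (2 * r + 1) + 1 := by
  have hinner : ∀ m, innerLabel r m 0 = r + if m < 2 * r then 1 else 0 := by
    intro m; simp only [innerLabel, if_true]; split_ifs <;> omega
  have hfilter : (range (4 * r - 1)).filter (· < 2 * r) = range (2 * r) := by
    ext m; simp only [mem_filter, mem_range]; omega
  have hclass : ∀ b, edgeLength r (4 * r - 1) b = 0 := by simp [edgeLength]
  simp only [innerSum, hclass]
  rw [sum_comp_matchingIndex (by omega) (innerLabel r · 0)]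
  simp only [hinner, sum_add_distrib, sum_const, card_range, sum_boole, hfilter, smul_eq_mul,
    Nat.cast_id]
  obtain ⟨s, rfl⟩ : ∃ s, r = s + 1 := ⟨r - 1, by omega⟩
  rw [show 4 * (s + 1) - 1 = 4 * s + 3 by omega]
  ring

theorem innerLabel_of_two_le (m : ℕ) {t : ℕ} (ht : 2 ≤ t) :
    innerLabel r m t = if t ≤ r then t - 1 else t + 1 := by
  simp only [innerLabel, if_neg (show t ≠ 0 by omega), if_neg (show t ≠ 1 by omega)]

/-- Every length `t ∈ [2, 2r-1]` occurs twice, and the lengths `t` and `2r+1-t` have inner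
labels summing to `2r + 1`. -/
theorem sum_innerLabel_middle (hr : 1 ≤ r) (f : ℕ → ℕ) :
    ∑ i ∈ range (4 * r - 4), innerLabel r (f i) (min (i + 2) (4 * r - 3 - i)) =
      2 * ((r - 1) * (2 * r + 1)) := by
  rw [show 4 * r - 4 = 2 * (2 * (r - 1)) by omega, sum_range_two_mul_eq_sum_add_reflect]
  have hpair : ∀ i ∈ range (2 * (r - 1)),
      innerLabel r (f i) (min (i + 2) (4 * r - 3 - i)) +
          innerLabel r (f (2 * (2 * (r - 1)) - 1 - i))
            (min (2 * (2 * (r - 1)) - 1 - i + 2) (4 * r - 3 - (2 * (2 * (r - 1)) - 1 - i))) =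
        2 * innerLabel r 0 (i + 2) := by
    intro i hi
    rw [mem_range] at hi
    rw [show min (i + 2) (4 * r - 3 - i) = i + 2 by omega,
      show min (2 * (2 * (r - 1)) - 1 - i + 2) (4 * r - 3 - (2 * (2 * (r - 1)) - 1 - i)) = i + 2 by
        omega]
    simp only [innerLabel_of_two_le _ (show 2 ≤ i + 2 by omega)]
    ring
  rw [sum_congr rfl hpair, ← mul_sum, sum_range_two_mul_eq_sum_add_reflect]
  have hpair' : ∀ i ∈ range (r - 1),
      innerLabel r 0 (i + 2) + innerLabel r 0 (2 * (r - 1) - 1 - i + 2) = 2 * r + 1 := by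
    intro i hi
    rw [mem_range] at hi
    rw [innerLabel_of_two_le 0 (by omega), innerLabel_of_two_le 0 (by omega)]
    split_ifs <;> omega
  rw [sum_congr rfl hpair', sum_const, card_range, smul_eq_mul]

theorem innerSum_eq_sum_shift {c : ℕ} (hc : c < 4 * r - 1) :
    innerSum r c =
      ∑ d ∈ range (4 * r - 1),
        innerLabel r (reduceMod r (2 * c + d)) (min d (4 * r - 1 - d)) := by
  refine sum_nbij' (fun b => if c ≤ b then b - c else b + (4 * r - 1) - c)
    (fun d => reduceMod r (c + d)) ?_ ?_ ?_ ?_ ?_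
  all_goals
    intro b hb; rw [mem_range] at hb
  · rw [mem_range]; split_ifs <;> omega
  · rw [mem_range]; unfold reduceMod; split_ifs <;> omega
  · simp only [reduceMod]; split_ifs <;> omega
  · simp only [reduceMod]; split_ifs <;> omega
  · congr 1
    · unfold matchingIndex reduceMod; split_ifs <;> omega
    · unfold edgeLength; split_ifs <;> omega

theorem innerSum_of_lt (hr : 1 ≤ r) {c : ℕ} (hc : c < 4 * r - 1) :
    innerSum r c =
      innerLabel r (reduceMod r (2 * c)) 0 + innerLabel r (reduceMod r (2 * c + 1)) 1 +
        innerLabel r (reduceMod r (2 * c + (4 * r - 2))) 1 + 2 * ((r - 1) * (2 * r + 1)) := by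
  rw [innerSum_eq_sum_shift hc, show 4 * r - 1 = 4 * r - 4 + 2 + 1 by omega, sum_range_succ,
    sum_range_succ', sum_range_succ']
  rw [show 4 * r - 4 + 2 + 1 = 4 * r - 1 by omega]
  have hmid : ∑ k ∈ range (4 * r - 4), innerLabel r (reduceMod r (2 * c + (k + 1 + 1)))
      (min (k + 1 + 1) (4 * r - 1 - (k + 1 + 1))) = 2 * ((r - 1) * (2 * r + 1)) := by
    rw [← sum_innerLabel_middle hr (fun k => reduceMod r (2 * c + (k + 1 + 1)))]
    exact sum_congr rfl fun k _ => congrArg _ (by omega)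
  rw [hmid, show min (0 + 1) (4 * r - 1 - (0 + 1)) = 1 by omega,
    show min (4 * r - 4 + 2) (4 * r - 1 - (4 * r - 4 + 2)) = 1 by omega,
    show 4 * r - 4 + 2 = 4 * r - 2 by omega, Nat.zero_min, add_zero, zero_add]
  ring

/-- The weaker bound at the vertex `2r - 1` is needed only for `r = 1`. -/
theorem innerSum_bounds_of_lt (hr : 1 ≤ r) {c : ℕ} (hc : c < 4 * r - 1) :
    (4 * r - 1) * (2 * r + 1) ≤ 2 * innerSum r c + (if c = 2 * r - 1 then 3 else 1) ∧
      2 * innerSum r c ≤ (4 * r - 1) * (2 * r + 1) + 1 := by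
  have hconst : (4 * r - 1) * (2 * r + 1) = 4 * ((r - 1) * (2 * r + 1)) + 6 * r + 3 := by
    obtain ⟨s, rfl⟩ : ∃ s, r = s + 1 := ⟨r - 1, by omega⟩
    rw [show 4 * (s + 1) - 1 = 4 * s + 3 by omega, Nat.add_sub_cancel]
    ring
  rw [innerSum_of_lt hr hc, hconst]
  simp only [innerLabel, reduceMod, one_ne_zero, if_true, if_false]
  split_ifs <;> omega

theorem popularity_labeling_near_mean (hr : 1 ≤ r) (v : Fin (4 * r)) :
    (4 * r - 1) * (2 * r * (4 * r - 1) + 1) ≤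
        2 * popularity ⊤ (labeling r) v + (if (v : ℕ) = 2 * r - 1 then 3 else 1) ∧
      2 * popularity ⊤ (labeling r) v ≤
        (4 * r - 1) * (2 * r * (4 * r - 1) + 1) + (if (v : ℕ) = 2 * r - 1 then 3 else 1) := by
  have h := two_mul_popularity_labeling hr v
  rcases (show (v : ℕ) = 4 * r - 1 ∨ (v : ℕ) < 4 * r - 1 by omega) with hv | hv
  · have := two_mul_innerSum_infinity hr
    rw [show innerSum r v = innerSum r (4 * r - 1) by rw [hv]] at h
    rw [if_neg (by omega)]
    omega
  · have := innerSum_bounds_of_lt hr hv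
    split_ifs at * <;> omega

theorem accessVar_labeling_le (hr : 1 ≤ r) :
    accessVar ⊤ (4 * r - 1) (labeling r) ≤ r + 2 := by
  have hvertex : ∀ v : Fin (4 * r),
      ((popularity ⊤ (labeling r) v : ℝ) -
          ((4 * r - 1 : ℕ) : ℝ) *
            (Nat.card (⊤ : SimpleGraph (Fin (4 * r))).edgeSet + 1) / 2) ^ 2 ≤
        1 / 4 + if v = ⟨2 * r - 1, by omega⟩ then 2 else 0 := by
    intro v
    obtain ⟨h₁, h₂⟩ := popularity_labeling_near_mean hr v
    have := sq_sub_half_le h₁ h₂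
    rw [card_edgeSet_top_fin]
    push_cast at this ⊢
    simp only [Fin.ext_iff]
    split_ifs at this ⊢ <;> linarith
  calc accessVar ⊤ (4 * r - 1) (labeling r)
      ≤ ∑ v : Fin (4 * r), (1 / 4 + if v = ⟨2 * r - 1, by omega⟩ then (2 : ℝ) else 0) :=
        sum_le_sum fun v _ => hvertex v
    _ = r + 2 := by
        rw [sum_add_distrib, sum_ite_eq', if_pos (mem_univ _), sum_const, card_univ,
          Fintype.card_fin, nsmul_eq_mul]
        push_cast
        ring

end CompleteGraphLabeling

/-- For every positive integer `r`, the complete graph `K_{4r}`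
(which is `(4r−1)`-regular) satisfies `MinVar(K_{4r}) ≤ 3r` if `r` is odd and
`MinVar(K_{4r}) ≤ 7r` if `r` is even. -/
theorem statement16 (r : ℕ) (hr : 1 ≤ r) :
    (Odd r → minVar (⊤ : SimpleGraph (Fin (4 * r))) (4 * r - 1) ≤ 3 * r) ∧
      (Even r → minVar (⊤ : SimpleGraph (Fin (4 * r))) (4 * r - 1) ≤ 7 * r) := by
  have hmin : minVar (⊤ : SimpleGraph (Fin (4 * r))) (4 * r - 1) ≤ r + 2 :=
    (minVar_le_accessVar _ _ (CompleteGraphLabeling.isEdgeLabeling_labeling hr)).trans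
      (CompleteGraphLabeling.accessVar_labeling_le hr)
  have : (1 : ℝ) ≤ r := by exact_mod_cast hr
  exact ⟨fun _ => by linarith, fun _ => by linarith⟩
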